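/- Let A, B, H be pure unit quaternions with A·H = −H·A (equivalently, the commutator of A and H equals −1). Then there exist a unit quaternion g, γ ∈ [0, π], and τ ∈ ℝ with g·A·g⁻¹ = i, g·B·g⁻¹ = e^{γk}·i, and g·H·g⁻¹ = e^{τi}·j. Moreover, for (γ, τ), (γ', τ') ∈ [0, π] × ℝ the triples (i, e^{γk}·i, e^{τi}·j) and (i, e^{γ'k}·i, e^{τ'i}·j) are simultaneously conjugate by a unit quaternion if and only if γ = γ' and (sin γ = 0 or e^{τi} = e^{τ'i}). (Hence the space R^♮(B³, A₁ ∪ A₂) of conjugacy classes of such triples is a 2-sphere with cylindrical coordinates (γ, τ).) -/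

import Mathlib

open Quaternion

noncomputable section

def qi : ℍ[ℝ] := ⟨0, 1, 0, 0⟩

def qj : ℍ[ℝ] := ⟨0, 0, 1, 0⟩

def qk : ℍ[ℝ] := ⟨0, 0, 0, 1⟩

/-- The quaternionic exponential `e^{tQ} = cos t + (sin t) • Q` for a pure unit
quaternion `Q`. -/
def expQ (t : ℝ) (Q : ℍ[ℝ]) : ℍ[ℝ] := ((Real.cos t : ℝ) : ℍ[ℝ]) + (Real.sin t) • Q

/-! Conjugation by `e^{θi}` fixes `i` and rotates the `jk`-plane by `2θ`:
it sends `e^{τi}j` to `e^{(τ+2θ)i}j`. Any two pure unit quaternions are conjugate (both square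
to `-1`), so we may take `A = i`; then `H`, anticommuting with `i`, lies in the `jk`-plane and is
some `e^{τi}j`, while `B = cos γ · i + sin γ · e^{φi}j`, and rotating by `-φ` gives the normal
form. Conversely a unit quaternion fixing `i` is some `e^{θi}`, so the only freedom left is a
rotation of the `jk`-plane: it shifts `τ` and is detected by `B` exactly when `sin γ ≠ 0`. -/

section Exponential

variable {Q P : ℍ[ℝ]}

lemma expQ_eq_smul (t : ℝ) (Q : ℍ[ℝ]) : expQ t Q = Real.cos t • 1 + Real.sin t • Q := by
  ext <;> simp [expQ]

lemma expQ_zero (Q : ℍ[ℝ]) : expQ 0 Q = 1 := by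
  simp [expQ]

lemma expQ_add (hQ : Q * Q = -1) (s t : ℝ) : expQ (s + t) Q = expQ s Q * expQ t Q := by
  simp only [expQ_eq_smul, Real.cos_add, Real.sin_add, add_mul, mul_add, smul_mul_smul,
    one_mul, mul_one, hQ]
  module

lemma inv_expQ (hQ : Q * Q = -1) (t : ℝ) : (expQ t Q)⁻¹ = expQ (-t) Q :=
  inv_eq_of_mul_eq_one_right <| by rw [← expQ_add hQ, add_neg_cancel, expQ_zero]

lemma commute_expQ (t : ℝ) (Q : ℍ[ℝ]) : Commute Q (expQ t Q) := by
  rw [expQ_eq_smul]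
  exact ((Commute.one_right Q).smul_right _).add_right ((Commute.refl Q).smul_right _)

lemma mul_expQ_of_anticomm (hPQ : P * Q = -(Q * P)) (t : ℝ) :
    P * expQ t Q = expQ (-t) Q * P := by
  simp only [expQ_eq_smul, Real.cos_neg, Real.sin_neg, mul_add, add_mul, mul_smul_comm,
    smul_mul_assoc, one_mul, mul_one, hPQ]
  module

lemma conj_expQ_self (hQ : Q * Q = -1) (θ : ℝ) : expQ θ Q * Q * (expQ θ Q)⁻¹ = Q := by
  rw [← (commute_expQ θ Q).eq, inv_expQ hQ, mul_assoc, ← expQ_add hQ, add_neg_cancel, expQ_zero,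
    mul_one]

lemma conj_expQ_of_anticomm (hQ : Q * Q = -1) (hPQ : P * Q = -(Q * P)) (θ τ : ℝ) :
    expQ θ Q * (expQ τ Q * P) * (expQ θ Q)⁻¹ = expQ (τ + 2 * θ) Q * P := by
  rw [inv_expQ hQ, mul_assoc, mul_assoc, mul_expQ_of_anticomm hPQ, neg_neg,
    show τ + 2 * θ = θ + τ + θ by ring, expQ_add hQ, expQ_add hQ]
  simp only [mul_assoc]

lemma conj_expQ_smul_add_smul (hQ : Q * Q = -1) (hPQ : P * Q = -(Q * P)) (a b θ φ : ℝ) :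
    expQ θ Q * (a • Q + b • (expQ φ Q * P)) * (expQ θ Q)⁻¹ =
      a • Q + b • (expQ (φ + 2 * θ) Q * P) := by
  rw [mul_add, add_mul, mul_smul_comm, mul_smul_comm, smul_mul_assoc, smul_mul_assoc,
    conj_expQ_self hQ, conj_expQ_of_anticomm hQ hPQ]

end Exponential

section Conjugation

variable {g : ℍ[ℝ]}

lemma conj_mul_conj (hg : g ≠ 0) (x y : ℍ[ℝ]) :
    g * x * g⁻¹ * (g * y * g⁻¹) = g * (x * y) * g⁻¹ := by
  simp only [mul_assoc, inv_mul_cancel_left₀ hg]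

lemma conj_conj (g h x : ℍ[ℝ]) : g * (h * x * h⁻¹) * g⁻¹ = g * h * x * (g * h)⁻¹ := by
  simp only [mul_inv_rev, mul_assoc]

lemma re_conj (hg : g ≠ 0) (x : ℍ[ℝ]) : (g * x * g⁻¹).re = x.re := by
  have re_mul_comm (a b : ℍ[ℝ]) : (a * b).re = (b * a).re := by simp only [re_mul]; ring
  rw [re_mul_comm, ← mul_assoc, inv_mul_cancel₀ hg, one_mul]

lemma norm_conj (hg : g ≠ 0) (x : ℍ[ℝ]) : ‖g * x * g⁻¹‖ = ‖x‖ := by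
  rw [norm_mul, norm_mul, norm_inv, mul_comm ‖g‖, mul_assoc,
    mul_inv_cancel₀ (norm_ne_zero_iff.2 hg), mul_one]

lemma conj_anticomm (hg : g ≠ 0) {x y : ℍ[ℝ]} (h : x * y = -(y * x)) :
    g * x * g⁻¹ * (g * y * g⁻¹) = -(g * y * g⁻¹ * (g * x * g⁻¹)) := by
  rw [conj_mul_conj hg, conj_mul_conj hg, h, mul_neg, neg_mul]

end Conjugation

lemma norm_eq_one_iff_normSq {q : ℍ[ℝ]} : ‖q‖ = 1 ↔ normSq q = 1 := by
  rw [normSq_eq_norm_mul_self, ← sq, pow_eq_one_iff_of_nonneg (norm_nonneg q) two_ne_zero]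

lemma mul_self_eq_neg_one {A : ℍ[ℝ]} (hA : ‖A‖ = 1) (hre : A.re = 0) : A * A = -1 := by
  rw [← sq, sq_eq_neg_normSq.2 hre, normSq_eq_norm_mul_self, hA, mul_one, coe_one]

lemma exists_polar (y z : ℝ) :
    ∃ τ, y = √(y ^ 2 + z ^ 2) * Real.cos τ ∧ z = √(y ^ 2 + z ^ 2) * Real.sin τ := by
  have hnorm : ‖(⟨y, z⟩ : ℂ)‖ = √(y ^ 2 + z ^ 2) := by
    rw [Complex.norm_def, Complex.normSq_mk, sq, sq]
  exact ⟨Complex.arg ⟨y, z⟩, by rw [← hnorm, Complex.norm_mul_cos_arg],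
    by rw [← hnorm, Complex.norm_mul_sin_arg]⟩

@[simp] lemma re_qi : qi.re = 0 := rfl
@[simp] lemma imI_qi : qi.imI = 1 := rfl
@[simp] lemma imJ_qi : qi.imJ = 0 := rfl
@[simp] lemma imK_qi : qi.imK = 0 := rfl
@[simp] lemma re_qj : qj.re = 0 := rfl
@[simp] lemma imI_qj : qj.imI = 0 := rfl
@[simp] lemma imJ_qj : qj.imJ = 1 := rfl
@[simp] lemma imK_qj : qj.imK = 0 := rfl
@[simp] lemma re_qk : qk.re = 0 := rfl
@[simp] lemma imI_qk : qk.imI = 0 := rfl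
@[simp] lemma imJ_qk : qk.imJ = 0 := rfl
@[simp] lemma imK_qk : qk.imK = 1 := rfl

lemma qi_mul_qi : qi * qi = -1 := by ext <;> simp [re_mul, imI_mul, imJ_mul, imK_mul]
lemma qj_mul_qi : qj * qi = -(qi * qj) := by ext <;> simp [re_mul, imI_mul, imJ_mul, imK_mul]
lemma qk_mul_qi : qk * qi = qj := by ext <;> simp [re_mul, imI_mul, imJ_mul, imK_mul]
lemma qj_ne_zero : qj ≠ 0 := fun h => by simpa using congrArg (·.imJ) h

lemma expQ_qk_mul_qi (t : ℝ) : expQ t qk * qi = Real.cos t • qi + Real.sin t • qj := by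
  rw [expQ_eq_smul, add_mul, smul_mul_assoc, smul_mul_assoc, one_mul, qk_mul_qi]

lemma norm_expQ_qi (t : ℝ) : ‖expQ t qi‖ = 1 := by
  rw [norm_eq_one_iff_normSq, normSq_def']
  simp [expQ, Real.cos_sq_add_sin_sq]

lemma eq_expQ_qi_of_commute {g : ℍ[ℝ]} (hg : ‖g‖ = 1) (h : g * qi = qi * g) :
    ∃ θ, g = expQ θ qi := by
  have hjk : g.imJ = 0 ∧ g.imK = 0 := by
    have hJ := congrArg (·.imJ) h
    have hK := congrArg (·.imK) h
    simp only [imJ_mul, imK_mul, re_qi, imI_qi, imJ_qi, imK_qi, mul_zero, zero_mul, mul_one,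
      one_mul, add_zero, zero_add, sub_zero, zero_sub, sub_self] at hJ hK
    constructor <;> linarith
  obtain ⟨θ, hre, himI⟩ := exists_polar g.re g.imI
  have hnorm : √(g.re ^ 2 + g.imI ^ 2) = 1 := by
    rw [norm_eq_one_iff_normSq, normSq_def', hjk.1, hjk.2] at hg
    norm_num at hg
    rw [hg, Real.sqrt_one]
  refine ⟨θ, ?_⟩
  ext <;> simp [expQ, hjk, hnorm ▸ hre, hnorm ▸ himI]

lemma exists_eq_smul_expQ_qi_mul_qj {x : ℍ[ℝ]} (hre : x.re = 0) (hI : x.imI = 0) :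
    ∃ τ, x = √(x.imJ ^ 2 + x.imK ^ 2) • (expQ τ qi * qj) := by
  obtain ⟨τ, hJ, hK⟩ := exists_polar x.imJ x.imK
  refine ⟨τ, ?_⟩
  ext <;> simp [expQ, re_mul, imI_mul, imJ_mul, imK_mul, hre, hI] <;> assumption

lemma eq_expQ_qi_mul_qj_of_anticomm {H : ℍ[ℝ]} (hH : ‖H‖ = 1) (h : qi * H = -(H * qi)) :
    ∃ τ, H = expQ τ qi * qj := by
  have hI := congrArg (·.re) h
  have hre := congrArg (·.imI) h
  simp only [re_mul, imI_mul, re_neg, imI_neg, re_qi, imI_qi, imJ_qi, imK_qi] at hI hre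
  replace hre : H.re = 0 := by linarith
  replace hI : H.imI = 0 := by linarith
  rw [norm_eq_one_iff_normSq, normSq_def', hre, hI] at hH
  obtain ⟨τ, hτ⟩ := exists_eq_smul_expQ_qi_mul_qj hre hI
  exact ⟨τ, by rwa [show H.imJ ^ 2 + H.imK ^ 2 = 1 by linarith, Real.sqrt_one, one_smul] at hτ⟩

lemma exists_eq_cos_smul_qi_add_sin_smul {B : ℍ[ℝ]} (hB : ‖B‖ = 1) (hre : B.re = 0) :
    ∃ γ ∈ Set.Icc 0 Real.pi, ∃ φ,
      B = Real.cos γ • qi + Real.sin γ • (expQ φ qi * qj) := by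
  rw [norm_eq_one_iff_normSq, normSq_def', hre] at hB
  obtain ⟨φ, hφ⟩ := exists_eq_smul_expQ_qi_mul_qj (x := B - B.imI • qi) (by simp [hre]) (by simp)
  have hcos : Real.cos (Real.arccos B.imI) = B.imI := Real.cos_arccos (by nlinarith) (by nlinarith)
  have hsin : Real.sin (Real.arccos B.imI) = √(B.imJ ^ 2 + B.imK ^ 2) := by
    rw [Real.sin_arccos]
    congr 1
    linarith
  refine ⟨Real.arccos B.imI, ⟨Real.arccos_nonneg _, Real.arccos_le_pi _⟩, φ, ?_⟩
  simp only [imJ_sub, imK_sub, imJ_smul, imK_smul, imJ_qi, imK_qi, smul_zero, sub_zero] at hφ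
  rw [hcos, hsin, ← hφ, add_sub_cancel]

lemma exists_conj_eq_qi {A : ℍ[ℝ]} (hA : ‖A‖ = 1) (hre : A.re = 0) :
    ∃ g : ℍ[ℝ], ‖g‖ = 1 ∧ g * A * g⁻¹ = qi := by
  by_cases hAi : A = -qi
  · refine ⟨qj, ?_, ?_⟩
    · rw [norm_eq_one_iff_normSq, normSq_def']
      simp
    · rw [hAi, mul_neg, qj_mul_qi, neg_neg, mul_inv_cancel_right₀ qj_ne_zero]
  -- `qi * A - 1` intertwines `A` and `qi`, since both square to `-1`.
  set g := qi * A - 1 with hg_def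
  have hg : g * A = qi * g := by
    rw [hg_def, sub_mul, mul_sub, mul_assoc, mul_self_eq_neg_one hA hre, ← mul_assoc, qi_mul_qi]
    noncomm_ring
  have hg0 : g ≠ 0 := by
    intro h0
    apply hAi
    calc A = -(qi * qi) * A := by rw [qi_mul_qi, neg_neg, one_mul]
      _ = -qi := by rw [neg_mul, mul_assoc, sub_eq_zero.mp h0, mul_one]
  refine ⟨‖g‖⁻¹ • g, ?_, ?_⟩
  · rw [norm_smul, norm_inv, norm_norm, inv_mul_cancel₀ (norm_ne_zero_iff.2 hg0)]
  · have hc : ‖g‖⁻¹ • g ≠ 0 := smul_ne_zero (inv_ne_zero (norm_ne_zero_iff.2 hg0)) hg0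
    rw [mul_inv_eq_iff_eq_mul₀ hc, smul_mul_assoc, hg, mul_smul_comm]

lemma exists_conj_normalForm_of_anticomm_qi {B H : ℍ[ℝ]} (hB : ‖B‖ = 1) (hBre : B.re = 0)
    (hH : ‖H‖ = 1) (hanti : qi * H = -(H * qi)) :
    ∃ g : ℍ[ℝ], ∃ γ τ : ℝ, ‖g‖ = 1 ∧ γ ∈ Set.Icc 0 Real.pi ∧
      g * qi * g⁻¹ = qi ∧ g * B * g⁻¹ = expQ γ qk * qi ∧ g * H * g⁻¹ = expQ τ qi * qj := by
  obtain ⟨τ, rfl⟩ := eq_expQ_qi_mul_qj_of_anticomm hH hanti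
  obtain ⟨γ, hγ, φ, rfl⟩ := exists_eq_cos_smul_qi_add_sin_smul hB hBre
  refine ⟨expQ (-φ / 2) qi, γ, τ + 2 * (-φ / 2), norm_expQ_qi _, hγ,
    conj_expQ_self qi_mul_qi _, ?_, conj_expQ_of_anticomm qi_mul_qi qj_mul_qi _ _⟩
  rw [conj_expQ_smul_add_smul qi_mul_qi qj_mul_qi, show φ + 2 * (-φ / 2) = 0 by ring,
    expQ_zero, one_mul, expQ_qk_mul_qi]

lemma exists_conj_normalForm {A B H : ℍ[ℝ]} (hA : ‖A‖ = 1) (hAre : A.re = 0)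
    (hB : ‖B‖ = 1) (hBre : B.re = 0) (hH : ‖H‖ = 1) (hanti : A * H = -(H * A)) :
    ∃ g : ℍ[ℝ], ∃ γ τ : ℝ, ‖g‖ = 1 ∧ γ ∈ Set.Icc 0 Real.pi ∧
      g * A * g⁻¹ = qi ∧ g * B * g⁻¹ = expQ γ qk * qi ∧ g * H * g⁻¹ = expQ τ qi * qj := by
  obtain ⟨g₁, hg₁, hA₁⟩ := exists_conj_eq_qi hA hAre
  have hg₁0 : g₁ ≠ 0 := norm_ne_zero_iff.1 (hg₁ ▸ one_ne_zero)
  have hanti₁ := conj_anticomm hg₁0 hanti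
  rw [hA₁] at hanti₁
  obtain ⟨g₂, γ, τ, hg₂, hγ, hA₂, hB₂, hH₂⟩ := exists_conj_normalForm_of_anticomm_qi
    ((norm_conj hg₁0 B).trans hB) ((re_conj hg₁0 B).trans hBre) ((norm_conj hg₁0 H).trans hH)
    hanti₁
  refine ⟨g₂ * g₁, γ, τ, by rw [norm_mul, hg₁, hg₂, one_mul], hγ, ?_, ?_, ?_⟩ <;>
    rw [← conj_conj]
  exacts [hA₁ ▸ hA₂, hB₂, hH₂]

lemma eq_of_conj_normalForm {γ γ' τ τ' : ℝ} (hγ : γ ∈ Set.Icc 0 Real.pi)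
    (hγ' : γ' ∈ Set.Icc 0 Real.pi) {g : ℍ[ℝ]} (hg : ‖g‖ = 1) (hA : g * qi * g⁻¹ = qi)
    (hB : g * (expQ γ qk * qi) * g⁻¹ = expQ γ' qk * qi)
    (hH : g * (expQ τ qi * qj) * g⁻¹ = expQ τ' qi * qj) :
    γ = γ' ∧ (Real.sin γ = 0 ∨ expQ τ qi = expQ τ' qi) := by
  have hg0 : g ≠ 0 := norm_ne_zero_iff.1 (hg ▸ one_ne_zero)
  obtain ⟨θ, rfl⟩ := eq_expQ_qi_of_commute hg ((mul_inv_eq_iff_eq_mul₀ hg0).1 hA)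
  have hqj : qj = expQ 0 qi * qj := by rw [expQ_zero, one_mul]
  rw [expQ_qk_mul_qi, expQ_qk_mul_qi, hqj, conj_expQ_smul_add_smul qi_mul_qi qj_mul_qi,
    zero_add] at hB
  have hcos : Real.cos γ = Real.cos γ' := by simpa [expQ, imI_mul] using congrArg (·.imI) hB
  obtain rfl : γ = γ' := Real.injOn_cos hγ hγ' hcos
  refine ⟨rfl, or_iff_not_imp_left.2 fun hsin => ?_⟩
  have hrot : expQ (2 * θ) qi = 1 := by
    rw [← expQ_zero qi]
    exact mul_right_cancel₀ qj_ne_zero (smul_right_injective _ hsin (add_left_cancel hB))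
  rw [conj_expQ_of_anticomm qi_mul_qi qj_mul_qi, expQ_add qi_mul_qi, hrot, mul_one] at hH
  exact mul_right_cancel₀ qj_ne_zero hH

lemma exists_conj_normalForm_of_eq {γ τ τ' : ℝ} (h : Real.sin γ = 0 ∨ expQ τ qi = expQ τ' qi) :
    ∃ g : ℍ[ℝ], ‖g‖ = 1 ∧ g * qi * g⁻¹ = qi ∧
      g * (expQ γ qk * qi) * g⁻¹ = expQ γ qk * qi ∧
      g * (expQ τ qi * qj) * g⁻¹ = expQ τ' qi * qj := by
  rcases h with hsin | hexp
  · refine ⟨expQ ((τ' - τ) / 2) qi, norm_expQ_qi _, conj_expQ_self qi_mul_qi _, ?_, ?_⟩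
    · rw [expQ_qk_mul_qi, hsin, zero_smul, add_zero, mul_smul_comm, smul_mul_assoc,
        conj_expQ_self qi_mul_qi]
    · rw [conj_expQ_of_anticomm qi_mul_qi qj_mul_qi, show τ + 2 * ((τ' - τ) / 2) = τ' by ring]
  · exact ⟨1, by simp [hexp]⟩

theorem natural_ball_two_sphere_general (A B H : ℍ[ℝ])
    (hAnorm : ‖A‖ = 1) (hAre : A.re = 0)
    (hBnorm : ‖B‖ = 1) (hBre : B.re = 0)
    (hHnorm : ‖H‖ = 1)
    (hanti : A * H = -(H * A)) :
    (∃ g : ℍ[ℝ], ∃ γ τ : ℝ, ‖g‖ = 1 ∧ γ ∈ Set.Icc 0 Real.pi ∧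
      g * A * g⁻¹ = qi ∧ g * B * g⁻¹ = expQ γ qk * qi ∧
      g * H * g⁻¹ = expQ τ qi * qj) ∧
    ∀ γ γ' : ℝ, γ ∈ Set.Icc 0 Real.pi → γ' ∈ Set.Icc 0 Real.pi → ∀ τ τ' : ℝ,
      ((∃ g : ℍ[ℝ], ‖g‖ = 1 ∧
          g * qi * g⁻¹ = qi ∧
          g * (expQ γ qk * qi) * g⁻¹ = expQ γ' qk * qi ∧
          g * (expQ τ qi * qj) * g⁻¹ = expQ τ' qi * qj) ↔
        (γ = γ' ∧ (Real.sin γ = 0 ∨ expQ τ qi = expQ τ' qi))) := by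
  refine ⟨exists_conj_normalForm hAnorm hAre hBnorm hBre hHnorm hanti,
    fun γ γ' hγ hγ' τ τ' => ⟨?_, ?_⟩⟩
  · rintro ⟨g, hg, hA, hB, hH⟩
    exact eq_of_conj_normalForm hγ hγ' hg hA hB hH
  · rintro ⟨rfl, h⟩
    exact exists_conj_normalForm_of_eq h

/-- The space `R^♮(B³, A₁ ∪ A₂)` is a 2-sphere with cylindrical coordinates `(γ,τ)`:
(1) every triple `(A,B,H)` of pure unit quaternions with `AH = -HA` is conjugate to
`(i, e^{γk}i, e^{τi}j)` with `γ ∈ [0,π]`, `τ ∈ ℝ`; (2) two such normal forms are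
conjugate iff `γ = γ'` and (`sin γ = 0` or `e^{τi} = e^{τ'i}`). -/
theorem natural_ball_two_sphere (A B H : ℍ[ℝ])
    (hAnorm : ‖A‖ = 1) (hAre : A.re = 0)
    (hBnorm : ‖B‖ = 1) (hBre : B.re = 0)
    (hHnorm : ‖H‖ = 1) (hHre : H.re = 0)
    (hanti : A * H = -(H * A)) :
    (∃ g : ℍ[ℝ], ∃ γ τ : ℝ, ‖g‖ = 1 ∧ γ ∈ Set.Icc 0 Real.pi ∧
      g * A * g⁻¹ = qi ∧ g * B * g⁻¹ = expQ γ qk * qi ∧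
      g * H * g⁻¹ = expQ τ qi * qj) ∧
    ∀ γ γ' : ℝ, γ ∈ Set.Icc 0 Real.pi → γ' ∈ Set.Icc 0 Real.pi → ∀ τ τ' : ℝ,
      ((∃ g : ℍ[ℝ], ‖g‖ = 1 ∧
          g * qi * g⁻¹ = qi ∧
          g * (expQ γ qk * qi) * g⁻¹ = expQ γ' qk * qi ∧
          g * (expQ τ qi * qj) * g⁻¹ = expQ τ' qi * qj) ↔
        (γ = γ' ∧ (Real.sin γ = 0 ∨ expQ τ qi = expQ τ' qi))) :=
  natural_ball_two_sphere_general A B H hAnorm hAre hBnorm hBre hHnorm hanti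

end
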